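/- arXiv:2005.11492 — 3 statements merged into one kernel-verified Lean document; each statement's English description precedes it below -/
import Mathlib

section
/- Consider a nonlinear NI system H₁ with storage function V₁ and a nonlinear OSNI system H₂ with storage function V₂ and output strictness δ > 0, interconnected in positive feedback (u₁ = y₂, u₂ = y₁). Suppose Assumptions I, II and III hold for H₁ and H₂. If the function W(x₁,x₂) = V₁(x₁) + V₂(x₂) − h₁(x₁)ᵀh₂(x₂) is positive definite, then the equilibrium point (x₁,x₂) = (0,0) of the closed-loop interconnection is asymptotically stable (i.e., it is Lyapunov stable and trajectories starting sufficiently close to the origin converge to the origin as t → ∞). -/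
noncomputable section

open scoped RealInnerProductSpace
open Filter

abbrev Vec (n : ℕ) : Type := EuclideanSpace ℝ (Fin n)

def IsTrajectory {p m : ℕ} (f : Vec p → Vec m → Vec p)
    (x : ℝ → Vec p) (u : ℝ → Vec m) : Prop :=
  ∀ t : ℝ, HasDerivAt x (f (x t) (u t)) t

def PosDefFn {E : Type*} [Zero E] (V : E → ℝ) : Prop :=
  V 0 = 0 ∧ ∀ x, x ≠ 0 → 0 < V x

def NIStorage {p m : ℕ} (f : Vec p → Vec m → Vec p) (h : Vec p → Vec m)
    (V : Vec p → ℝ) : Prop :=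
  ∀ (x : ℝ → Vec p) (u : ℝ → Vec m), IsTrajectory f x u →
    ∀ t : ℝ, deriv (fun s => V (x s)) t ≤ ⟪u t, deriv (fun s => h (x s)) t⟫

def OSNIStorage {p m : ℕ} (f : Vec p → Vec m → Vec p) (h : Vec p → Vec m)
    (V : Vec p → ℝ) (δ : ℝ) : Prop :=
  ∀ (x : ℝ → Vec p) (u : ℝ → Vec m), IsTrajectory f x u →
    ∀ t : ℝ, deriv (fun s => V (x s)) t ≤
      ⟪u t, deriv (fun s => h (x s)) t⟫ - δ * ‖deriv (fun s => h (x s)) t‖ ^ 2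

def linF {q m : ℕ} (A : Matrix (Fin q) (Fin q) ℝ) (B : Matrix (Fin q) (Fin m) ℝ) :
    Vec q → Vec m → Vec q :=
  fun x u => Matrix.toEuclideanLin A x + Matrix.toEuclideanLin B u

def linH {q m : ℕ} (C : Matrix (Fin m) (Fin q) ℝ) : Vec q → Vec m :=
  fun x => Matrix.toEuclideanLin C x

/-- Assumption I for a system (f, h): over any nondegenerate time interval, the output
remains constant iff the state remains constant; moreover the state is identically zero
iff the output is identically zero. -/
def AssumptionI {p m : ℕ} (f : Vec p → Vec m → Vec p) (h : Vec p → Vec m) : Prop :=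
  ∀ (x : ℝ → Vec p) (u : ℝ → Vec m), IsTrajectory f x u →
    ∀ ta tb : ℝ, ta < tb →
      (((∀ s ∈ Set.Icc ta tb, ∀ s' ∈ Set.Icc ta tb, x s = x s') ↔
          (∀ s ∈ Set.Icc ta tb, ∀ s' ∈ Set.Icc ta tb, h (x s) = h (x s'))) ∧
        ((∀ s ∈ Set.Icc ta tb, x s = 0) ↔ (∀ s ∈ Set.Icc ta tb, h (x s) = 0)))

/-- Assumption II for a system (f, h): over any nondegenerate time interval, the state
remaining constant implies the input remains constant; moreover the state being
identically zero implies the input is identically zero. -/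
def AssumptionII {p m : ℕ} (f : Vec p → Vec m → Vec p) (h : Vec p → Vec m) : Prop :=
  ∀ (x : ℝ → Vec p) (u : ℝ → Vec m), IsTrajectory f x u →
    ∀ ta tb : ℝ, ta < tb →
      (((∀ s ∈ Set.Icc ta tb, ∀ s' ∈ Set.Icc ta tb, x s = x s') →
          (∀ s ∈ Set.Icc ta tb, ∀ s' ∈ Set.Icc ta tb, u s = u s')) ∧
        ((∀ s ∈ Set.Icc ta tb, x s = 0) → (∀ s ∈ Set.Icc ta tb, u s = 0)))

/-- Assumption III for the open-loop cascade of H₁ = (f₁, h₁) followed by H₂ = (f₂, h₂):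
there is a uniform constant γ ∈ (0,1) such that whenever H₁ is driven by a constant input
u₁bar, its output is fed as input to H₂, and the output of H₂ is constant, y₂(t) ≡ y₂bar,
one has u₁barᵀ y₂bar ≤ γ |u₁bar|². -/
def AssumptionIII {p m : ℕ} (f₁ : Vec p → Vec m → Vec p) (h₁ : Vec p → Vec m)
    (f₂ : Vec p → Vec m → Vec p) (h₂ : Vec p → Vec m) (γ : ℝ) : Prop :=
  ∀ (x₁ : ℝ → Vec p) (u₁ : ℝ → Vec m) (x₂ : ℝ → Vec p)
    (u₁bar y₂bar : Vec m) (ta tb : ℝ), ta < tb →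
    IsTrajectory f₁ x₁ u₁ →
    IsTrajectory f₂ x₂ (fun t => h₁ (x₁ t)) →
    (∀ s ∈ Set.Icc ta tb, u₁ s = u₁bar) →
    (∀ s ∈ Set.Icc ta tb, h₂ (x₂ s) = y₂bar) →
    ⟪u₁bar, y₂bar⟫ ≤ γ * ‖u₁bar‖ ^ 2

/-- The positive feedback interconnection of H₁ = (f₁, h₁) and H₂ = (f₂, h₂) with zero
external input: u₁ = y₂ and u₂ = y₁. -/
def ClosedLoop {p m : ℕ} (f₁ : Vec p → Vec m → Vec p) (h₁ : Vec p → Vec m)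
    (f₂ : Vec p → Vec m → Vec p) (h₂ : Vec p → Vec m)
    (x₁ x₂ : ℝ → Vec p) : Prop :=
  IsTrajectory f₁ x₁ (fun t => h₂ (x₂ t)) ∧
  IsTrajectory f₂ x₂ (fun t => h₁ (x₁ t))

open scoped NNReal Topology
open Set Metric

/-!
LaSalle's invariance principle with the storage function
`W(x₁, x₂) = V₁(x₁) + V₂(x₂) - ⟪h₁(x₁), h₂(x₂)⟫`. Along the closed loop the NI and OSNI
inequalities combine to `Ẇ ≤ -δ ‖ẏ₂‖²`, so `W` is a Lyapunov function and the origin is stable.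
A bounded trajectory has a nonempty ω-limit set, which is invariant and on which `W` is constant;
on an integral curve in it `ẏ₂ ≡ 0`, so `y₂` is constant and, with `u₁ = y₂`, Assumption III forces
`y₂ ≡ 0`. Assumptions I and II then give `x₂ ≡ 0`, `y₁ = u₂ ≡ 0` and `x₁ ≡ 0`. Hence `W` tends to
`W(0) = 0` along the trajectory, which therefore tends to the origin.
-/

section Lyapunov

variable {E : Type*} [NormedAddCommGroup E]

theorem PosDefFn.nonneg {W : E → ℝ} (hW : PosDefFn W) (x : E) : 0 ≤ W x := by
  rcases eq_or_ne x 0 with rfl | hx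
  · exact hW.1.ge
  · exact (hW.2 x hx).le

theorem PosDefFn.exists_pos_le_of_isCompact {W : E → ℝ} (hW : PosDefFn W) (hWc : Continuous W)
    {K : Set E} (hK : IsCompact K) (h0 : (0 : E) ∉ K) : ∃ c > 0, ∀ x ∈ K, c ≤ W x :=
  hK.exists_forall_le' hWc.continuousOn fun x hx => hW.2 x (ne_of_mem_of_not_mem hx h0)

theorem PosDefFn.exists_forall_norm_lt [ProperSpace E] {W : E → ℝ} (hW : PosDefFn W)
    (hWc : Continuous W) {ε : ℝ} (hε : 0 < ε) :
    ∃ r > 0, ∀ z : ℝ → E, Continuous z → ‖z 0‖ < r → (∀ t ≥ 0, W (z t) ≤ W (z 0)) →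
      ∀ t ≥ 0, ‖z t‖ < ε := by
  obtain ⟨c, hc, hcW⟩ := hW.exists_pos_le_of_isCompact hWc (isCompact_sphere 0 ε)
    (by simpa using hε.ne)
  obtain ⟨r, hr, hrW⟩ := Metric.continuousAt_iff.1 hWc.continuousAt c hc
  refine ⟨min r ε, lt_min hr hε, fun z hz hz0 hzW t ht => ?_⟩
  by_contra! hzt
  -- the trajectory has to cross the sphere of radius `ε`, where `W ≥ c > W (z 0)`
  obtain ⟨s, hs, hzs⟩ := intermediate_value_Icc ht hz.norm.continuousOn
    ⟨(hz0.trans_le (min_le_right r ε)).le, hzt⟩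
  have hW0 : W (z 0) < c := by
    have := hrW (x := z 0) (by rw [dist_zero_right]; exact hz0.trans_le (min_le_left r ε))
    rw [hW.1, dist_zero_right, Real.norm_eq_abs] at this
    exact (abs_lt.1 this).2
  exact (hW0.trans_le (hcW (z s) (by simpa using hzs))).not_ge (hzW s hs.1)

theorem PosDefFn.tendsto_zero {α : Type*} {l : Filter α} {W : E → ℝ} (hW : PosDefFn W)
    (hWc : Continuous W) {K : Set E} (hK : IsCompact K) {f : α → E} (hfK : ∀ᶠ a in l, f a ∈ K)
    (hWf : Tendsto (W ∘ f) l (𝓝 0)) : Tendsto f l (𝓝 0) := by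
  refine Metric.tendsto_nhds.2 fun ε hε => ?_
  obtain ⟨c, hc, hcW⟩ := hW.exists_pos_le_of_isCompact hWc (hK.diff isOpen_ball)
    fun h => h.2 (mem_ball_self hε)
  filter_upwards [hfK, hWf.eventually (gt_mem_nhds hc)] with a haK haW
  by_contra hfa
  exact (hcW (f a) ⟨haK, hfa⟩).not_gt haW

end Lyapunov

theorem uniformCauchySeqOn_of_dist_le_mul {α X Y : Type*} [PseudoMetricSpace X]
    [PseudoMetricSpace Y] {G : ℕ → α → X} {s : Set α} {b : ℕ → Y} (hb : CauchySeq b) {M : ℝ}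
    {N : ℕ} (h : ∀ k ≥ N, ∀ j ≥ N, ∀ x ∈ s, dist (G k x) (G j x) ≤ M * dist (b k) (b j)) :
    UniformCauchySeqOn G atTop s := by
  refine Metric.uniformCauchySeqOn_iff.2 fun ε hε => ?_
  obtain ⟨N', hN'⟩ := Metric.cauchySeq_iff.1 hb (ε / (|M| + 1)) (by positivity)
  refine ⟨max N N', fun k hk j hj x hx => ?_⟩
  calc dist (G k x) (G j x) ≤ M * dist (b k) (b j) :=
        h k (le_of_max_le_left hk) j (le_of_max_le_left hj) x hx
    _ ≤ (|M| + 1) * dist (b k) (b j) := by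
        gcongr
        linarith [le_abs_self M]
    _ < (|M| + 1) * (ε / (|M| + 1)) := by
        gcongr
        exact hN' k (le_of_max_le_right hk) j (le_of_max_le_right hj)
    _ = ε := by field_simp

section IntegralCurve

variable {E : Type*} [NormedAddCommGroup E] [NormedSpace ℝ E] {F : E → E} {K : Set E} {C : ℝ≥0}

theorem dist_le_of_isIntegralCurve_of_mem_Icc {v : ℝ → E → E}
    (hv : ∀ t, LipschitzOnWith C (v t) K) {ζ η : ℝ → E} (hζ : IsIntegralCurve ζ v)
    (hη : IsIntegralCurve η v) {S : ℝ} (hζK : ∀ t ∈ Icc 0 S, ζ t ∈ K)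
    (hηK : ∀ t ∈ Icc 0 S, η t ∈ K) {t : ℝ} (ht : t ∈ Icc 0 S) :
    dist (ζ t) (η t) ≤ dist (ζ 0) (η 0) * Real.exp (C * t) := by
  simpa using dist_le_of_trajectories_ODE_of_mem (fun t _ => hv t) hζ.continuous.continuousOn
    (fun t _ => (hζ t).hasDerivWithinAt) (fun t ht => hζK t (Ico_subset_Icc_self ht))
    hη.continuous.continuousOn (fun t _ => (hη t).hasDerivWithinAt)
    (fun t ht => hηK t (Ico_subset_Icc_self ht)) le_rfl t ht

theorem dist_le_of_isIntegralCurve_of_abs_le (hF : LipschitzOnWith C F K) {ζ η : ℝ → E}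
    (hζ : IsIntegralCurve ζ fun _ => F) (hη : IsIntegralCurve η fun _ => F) {S : ℝ}
    (hζK : ∀ t ∈ Icc (-S) S, ζ t ∈ K) (hηK : ∀ t ∈ Icc (-S) S, η t ∈ K) {t : ℝ}
    (ht : |t| ≤ S) : dist (ζ t) (η t) ≤ dist (ζ 0) (η 0) * Real.exp (C * |t|) := by
  have hS : 0 ≤ S := (abs_nonneg t).trans ht
  rcases le_total 0 t with h | h
  · rw [abs_of_nonneg h]
    exact dist_le_of_isIntegralCurve_of_mem_Icc (fun _ => hF) hζ hη
      (fun u hu => hζK u ⟨by linarith [hu.1], hu.2⟩) (fun u hu => hηK u ⟨by linarith [hu.1], hu.2⟩)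
      ⟨h, (le_abs_self t).trans ht⟩
  · -- run time backwards: `u ↦ ζ (-u)` is an integral curve of `-F`
    have hF' : ∀ _ : ℝ, LipschitzOnWith C ((-1 : ℝ) • F) K := fun _ x hx y hy => by
      simpa [edist_neg_neg] using hF hx hy
    have := dist_le_of_isIntegralCurve_of_mem_Icc hF' (hζ.comp_mul (-1)) (hη.comp_mul (-1))
      (fun u hu => hζK _ ⟨by linarith [hu.2], by linarith [hu.1]⟩)
      (fun u hu => hηK _ ⟨by linarith [hu.2], by linarith [hu.1]⟩)
      (t := -t) ⟨by linarith, (neg_le_abs t).trans ht⟩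
    simpa [abs_of_nonpos h] using this

theorem hasDerivAt_of_tendstoLocallyUniformlyOn_of_isIntegralCurve {ι : Type*} {l : Filter ι}
    [l.NeBot] (hF : UniformContinuousOn F K) {γ : ι → ℝ → E}
    (hγ : ∀ n, IsIntegralCurve (γ n) fun _ => F) {w : ℝ → E} {U : Set ℝ} (hU : IsOpen U)
    (hγw : TendstoLocallyUniformlyOn γ w l U) (hγK : ∀ᶠ n in l, MapsTo (γ n) U K)
    (hwK : MapsTo w U K) {t : ℝ} (ht : t ∈ U) : HasDerivAt w (F (w t)) t :=
  hasDerivAt_of_tendstoLocallyUniformlyOn hU (hF.comp_tendstoLocallyUniformlyOn hγw hwK hγK)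
    (.of_forall fun n u _ => hγ n u) (fun _ hu => hγw.tendsto_at hu) ht

theorem exists_isIntegralCurve_tendsto_comp_add [CompleteSpace E] (hF : LipschitzOnWith C F K)
    (hK : IsClosed K) {z : ℝ → E} (hz : IsIntegralCurve z fun _ => F) (hzK : ∀ t ≥ 0, z t ∈ K)
    {τ : ℕ → ℝ} (hτ : Tendsto τ atTop atTop) {z₀ : E} (hz₀ : Tendsto (z ∘ τ) atTop (𝓝 z₀)) :
    ∃ w : ℝ → E, IsIntegralCurve w (fun _ => F) ∧
      ∀ s, Tendsto (fun k => z (s + τ k)) atTop (𝓝 (w s)) := by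
  set G : ℕ → ℝ → E := fun k s => z (s + τ k)
  have hG : ∀ k, IsIntegralCurve (G k) fun _ => F := fun k => hz.comp_add (τ k)
  have hGK : ∀ S, ∀ᶠ k in atTop, MapsTo (G k) (Icc (-S) S) K := fun S =>
    (hτ.eventually_ge_atTop S).mono fun k hk s hs => hzK _ (by linarith [hs.1])
  -- Grönwall: on `[-S, S]` the shifts are uniformly Cauchy since their values `z (τ k)` at `0` are
  have hcauchy : ∀ S, UniformCauchySeqOn G atTop (Icc (-S) S) := fun S => by
    obtain ⟨N, hN⟩ := eventually_atTop.1 (hGK S)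
    refine uniformCauchySeqOn_of_dist_le_mul hz₀.cauchySeq (M := Real.exp (C * S)) (N := N)
      fun k hk j hj s hs => ?_
    calc dist (G k s) (G j s) ≤ dist (G k 0) (G j 0) * Real.exp (C * |s|) :=
          dist_le_of_isIntegralCurve_of_abs_le hF (hG k) (hG j) (hN k hk) (hN j hj) (abs_le.2 hs)
      _ ≤ Real.exp (C * S) * dist (z (τ k)) (z (τ j)) := by
          rw [mul_comm]
          simp only [G, zero_add]
          gcongr
          exact abs_le.2 hs
  choose w hw using fun s => cauchySeq_tendsto_of_complete
    ((hcauchy (|s| + 1)).cauchySeq (abs_le.1 (le_add_of_nonneg_right zero_le_one)))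
  have hwK : ∀ s, w s ∈ K := fun s =>
    hK.mem_of_tendsto (hw s) ((hGK |s|).mono fun k hk => hk (abs_le.1 le_rfl))
  refine ⟨w, fun s => ?_, hw⟩
  have hU : Ioo (-(|s| + 1)) (|s| + 1) ⊆ Icc (-(|s| + 1)) (|s| + 1) := Ioo_subset_Icc_self
  exact hasDerivAt_of_tendstoLocallyUniformlyOn_of_isIntegralCurve hF.uniformContinuousOn hG
    isOpen_Ioo
    (((hcauchy _).tendstoUniformlyOn_of_tendsto fun u _ => hw u).mono hU).tendstoLocallyUniformlyOn
    ((hGK _).mono fun k hk => hk.mono_left hU) (fun u _ => hwK u) (abs_lt.1 (lt_add_one |s|))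

theorem IsIntegralCurve.tendsto_zero_of_posDefFn [CompleteSpace E] (hF : LipschitzOnWith C F K)
    (hK : IsCompact K) {W : E → ℝ} (hW : PosDefFn W) (hWc : Continuous W)
    (hinv : ∀ w : ℝ → E, IsIntegralCurve w (fun _ => F) → (∀ s, W (w s) = W (w 0)) → w 0 = 0)
    {z : ℝ → E} (hz : IsIntegralCurve z fun _ => F) (hzK : ∀ t ≥ 0, z t ∈ K)
    (hzW : Antitone (W ∘ z)) : Tendsto z atTop (𝓝 0) := by
  obtain ⟨L, hL⟩ : ∃ L, Tendsto (W ∘ z) atTop (𝓝 L) :=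
    ⟨_, tendsto_atTop_ciInf hzW ⟨0, forall_mem_range.2 fun t => hW.nonneg _⟩⟩
  obtain ⟨z₀, -, φ, hφ, hz₀⟩ := hK.tendsto_subseq fun n : ℕ => hzK n n.cast_nonneg
  have hτ : Tendsto (fun k => (φ k : ℝ)) atTop atTop :=
    tendsto_natCast_atTop_atTop.comp hφ.tendsto_atTop
  obtain ⟨w, hw, hzw⟩ := exists_isIntegralCurve_tendsto_comp_add hF hK.isClosed hz hzK hτ hz₀
  have hWw : ∀ s, W (w s) = L := fun s => tendsto_nhds_unique ((hWc.tendsto _).comp (hzw s))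
    (hL.comp (tendsto_atTop_add_const_left _ s hτ))
  have hL0 : L = 0 := by rw [← hWw 0, hinv w hw fun s => (hWw s).trans (hWw 0).symm, hW.1]
  exact hW.tendsto_zero hWc hK ((eventually_ge_atTop 0).mono hzK) (hL0 ▸ hL)

end IntegralCurve

section Interconnection

def closedLoopField {p m : ℕ} (f₁ : Vec p → Vec m → Vec p) (h₁ : Vec p → Vec m)
    (f₂ : Vec p → Vec m → Vec p) (h₂ : Vec p → Vec m) (z : Vec p × Vec p) : Vec p × Vec p :=
  (f₁ z.1 (h₂ z.2), f₂ z.2 (h₁ z.1))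

def closedLoopStorage {p m : ℕ} (V₁ V₂ : Vec p → ℝ) (h₁ h₂ : Vec p → Vec m)
    (z : Vec p × Vec p) : ℝ :=
  V₁ z.1 + V₂ z.2 - ⟪h₁ z.1, h₂ z.2⟫

variable {p m : ℕ} {f₁ f₂ : Vec p → Vec m → Vec p} {h₁ h₂ : Vec p → Vec m}
  {V₁ V₂ : Vec p → ℝ} {x₁ x₂ : ℝ → Vec p}

theorem closedLoop_iff_isIntegralCurve :
    ClosedLoop f₁ h₁ f₂ h₂ x₁ x₂ ↔
      IsIntegralCurve (fun t => (x₁ t, x₂ t)) fun _ => closedLoopField f₁ h₁ f₂ h₂ :=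
  ⟨fun hx t => (hx.1 t).prodMk (hx.2 t),
    fun hx => ⟨fun t => hasFDerivAt_fst.comp_hasDerivAt (f := fun t => (x₁ t, x₂ t)) t (hx t),
      fun t => hasFDerivAt_snd.comp_hasDerivAt (f := fun t => (x₁ t, x₂ t)) t (hx t)⟩⟩

theorem locallyLipschitz_closedLoopField (hf₁ : LocallyLipschitz (Function.uncurry f₁))
    (hf₂ : LocallyLipschitz (Function.uncurry f₂)) (hh₁ : ContDiff ℝ 1 h₁)
    (hh₂ : ContDiff ℝ 1 h₂) : LocallyLipschitz (closedLoopField f₁ h₁ f₂ h₂) := by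
  have hfst := (LipschitzWith.prod_fst (α := Vec p) (β := Vec p)).locallyLipschitz
  have hsnd := (LipschitzWith.prod_snd (α := Vec p) (β := Vec p)).locallyLipschitz
  refine LocallyLipschitz.prodMk ?_ ?_
  · exact LocallyLipschitz.comp (f := Function.uncurry f₁)
      (g := fun z : Vec p × Vec p => (z.1, h₂ z.2)) hf₁
      (hfst.prodMk (hh₂.locallyLipschitz.comp hsnd))
  · exact LocallyLipschitz.comp (f := Function.uncurry f₂)
      (g := fun z : Vec p × Vec p => (z.2, h₁ z.1)) hf₂
      (hsnd.prodMk (hh₁.locallyLipschitz.comp hfst))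

theorem hasDerivAt_closedLoopStorage (hV₁ : Differentiable ℝ V₁) (hV₂ : Differentiable ℝ V₂)
    (hh₁ : Differentiable ℝ h₁) (hh₂ : Differentiable ℝ h₂) (hx₁ : Differentiable ℝ x₁)
    (hx₂ : Differentiable ℝ x₂) (t : ℝ) :
    HasDerivAt (fun s => closedLoopStorage V₁ V₂ h₁ h₂ (x₁ s, x₂ s))
      (deriv (fun s => V₁ (x₁ s)) t + deriv (fun s => V₂ (x₂ s)) t -
        (⟪h₁ (x₁ t), deriv (fun s => h₂ (x₂ s)) t⟫ +
          ⟪deriv (fun s => h₁ (x₁ s)) t, h₂ (x₂ t)⟫)) t :=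
  ((hV₁.comp hx₁ t).hasDerivAt.add (hV₂.comp hx₂ t).hasDerivAt).sub
    ((hh₁.comp hx₁ t).hasDerivAt.inner ℝ (hh₂.comp hx₂ t).hasDerivAt)

theorem deriv_closedLoopStorage_le {δ : ℝ} (hV₁ : Differentiable ℝ V₁)
    (hV₂ : Differentiable ℝ V₂) (hh₁ : Differentiable ℝ h₁) (hh₂ : Differentiable ℝ h₂)
    (hNI : NIStorage f₁ h₁ V₁) (hOSNI : OSNIStorage f₂ h₂ V₂ δ)
    (hx : ClosedLoop f₁ h₁ f₂ h₂ x₁ x₂) (t : ℝ) :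
    deriv (fun s => closedLoopStorage V₁ V₂ h₁ h₂ (x₁ s, x₂ s)) t ≤
      -δ * ‖deriv (fun s => h₂ (x₂ s)) t‖ ^ 2 := by
  rw [(hasDerivAt_closedLoopStorage hV₁ hV₂ hh₁ hh₂ (fun s => (hx.1 s).differentiableAt)
    (fun s => (hx.2 s).differentiableAt) t).deriv]
  have hV₁t := hNI x₁ _ hx.1 t
  have hV₂t := hOSNI x₂ _ hx.2 t
  rw [real_inner_comm] at hV₁t
  linarith

theorem antitone_closedLoopStorage {δ : ℝ} (hδ : 0 ≤ δ) (hV₁ : Differentiable ℝ V₁)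
    (hV₂ : Differentiable ℝ V₂) (hh₁ : Differentiable ℝ h₁) (hh₂ : Differentiable ℝ h₂)
    (hNI : NIStorage f₁ h₁ V₁) (hOSNI : OSNIStorage f₂ h₂ V₂ δ)
    (hx : ClosedLoop f₁ h₁ f₂ h₂ x₁ x₂) :
    Antitone fun t => closedLoopStorage V₁ V₂ h₁ h₂ (x₁ t, x₂ t) :=
  antitone_of_deriv_nonpos
    (fun t => (hasDerivAt_closedLoopStorage hV₁ hV₂ hh₁ hh₂ (fun s => (hx.1 s).differentiableAt)
      (fun s => (hx.2 s).differentiableAt) t).differentiableAt)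
    fun t => (deriv_closedLoopStorage_le hV₁ hV₂ hh₁ hh₂ hNI hOSNI hx t).trans
      (mul_nonpos_of_nonpos_of_nonneg (neg_nonpos.2 hδ) (sq_nonneg _))

theorem output_const_of_closedLoopStorage_const {δ : ℝ} (hδ : 0 < δ) (hV₁ : Differentiable ℝ V₁)
    (hV₂ : Differentiable ℝ V₂) (hh₁ : Differentiable ℝ h₁) (hh₂ : Differentiable ℝ h₂)
    (hNI : NIStorage f₁ h₁ V₁) (hOSNI : OSNIStorage f₂ h₂ V₂ δ)
    (hx : ClosedLoop f₁ h₁ f₂ h₂ x₁ x₂)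
    (hW : ∀ s, closedLoopStorage V₁ V₂ h₁ h₂ (x₁ s, x₂ s) =
      closedLoopStorage V₁ V₂ h₁ h₂ (x₁ 0, x₂ 0)) (s : ℝ) :
    h₂ (x₂ s) = h₂ (x₂ 0) := by
  refine is_const_of_deriv_eq_zero (f := fun s => h₂ (x₂ s))
    (hh₂.comp fun t => (hx.2 t).differentiableAt) (fun t => ?_) s 0
  have hle := deriv_closedLoopStorage_le hV₁ hV₂ hh₁ hh₂ hNI hOSNI hx t
  rw [funext hW, deriv_const] at hle
  have hsq : ‖deriv (fun s => h₂ (x₂ s)) t‖ ^ 2 ≤ 0 := by nlinarith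
  simpa using hsq

theorem closedLoop_eq_zero_of_output_const {γ : ℝ} (hγ : γ < 1) (hAI₁ : AssumptionI f₁ h₁)
    (hAI₂ : AssumptionI f₂ h₂) (hAII₂ : AssumptionII f₂ h₂)
    (hAIII : AssumptionIII f₁ h₁ f₂ h₂ γ) (hx : ClosedLoop f₁ h₁ f₂ h₂ x₁ x₂)
    (hy₂ : ∀ s, h₂ (x₂ s) = h₂ (x₂ 0)) : x₁ 0 = 0 ∧ x₂ 0 = 0 := by
  -- with `u₁ = y₂` constant, Assumption III reads `‖y₂‖² ≤ γ ‖y₂‖²`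
  have hy₂0 : h₂ (x₂ 0) = 0 := by
    have h := hAIII x₁ _ x₂ _ _ 0 1 one_pos hx.1 hx.2 (fun s _ => hy₂ s) (fun s _ => hy₂ s)
    rw [real_inner_self_eq_norm_sq] at h
    have hsq : ‖h₂ (x₂ 0)‖ ^ 2 ≤ 0 := by nlinarith [sq_nonneg ‖h₂ (x₂ 0)‖]
    simpa using hsq
  have hx₂ := (hAI₂ x₂ _ hx.2 0 1 one_pos).2.2 fun s _ => (hy₂ s).trans hy₂0
  have hy₁ := (hAII₂ x₂ _ hx.2 0 1 one_pos).2 hx₂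
  have hx₁ := (hAI₁ x₁ _ hx.1 0 1 one_pos).2.2 hy₁
  exact ⟨hx₁ 0 (left_mem_Icc.2 zero_le_one), hx₂ 0 (left_mem_Icc.2 zero_le_one)⟩

end Interconnection

theorem stmt0_general {p m : ℕ}
    (f₁ f₂ : Vec p → Vec m → Vec p) (h₁ h₂ : Vec p → Vec m)
    (K₁ K₂ : NNReal)
    (hf₁ : LipschitzWith K₁ (Function.uncurry f₁))
    (hf₂ : LipschitzWith K₂ (Function.uncurry f₂))
    (hh₁ : ContDiff ℝ 1 h₁) (hh₂ : ContDiff ℝ 1 h₂)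
    (V₁ V₂ : Vec p → ℝ)
    (hV₁c : ContDiff ℝ 1 V₁) (hV₂c : ContDiff ℝ 1 V₂)
    (δ : ℝ) (hδ : 0 < δ)
    (hNI : NIStorage f₁ h₁ V₁)
    (hOSNI : OSNIStorage f₂ h₂ V₂ δ)
    (hAI₁ : AssumptionI f₁ h₁) (hAI₂ : AssumptionI f₂ h₂)
    (hAII₂ : AssumptionII f₂ h₂)
    (γ : ℝ) (hγ1 : γ < 1)
    (hAIII : AssumptionIII f₁ h₁ f₂ h₂ γ)
    (hW : PosDefFn (fun z : Vec p × Vec p => V₁ z.1 + V₂ z.2 - ⟪h₁ z.1, h₂ z.2⟫)) :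
    -- Lyapunov stability of the equilibrium (0,0)
    (∀ ε > (0 : ℝ), ∃ r > (0 : ℝ), ∀ x₁ x₂ : ℝ → Vec p,
        ClosedLoop f₁ h₁ f₂ h₂ x₁ x₂ → ‖x₁ 0‖ < r → ‖x₂ 0‖ < r →
        ∀ t ≥ (0 : ℝ), ‖x₁ t‖ < ε ∧ ‖x₂ t‖ < ε) ∧
    -- local attractivity of the equilibrium (0,0)
    (∃ r > (0 : ℝ), ∀ x₁ x₂ : ℝ → Vec p,
        ClosedLoop f₁ h₁ f₂ h₂ x₁ x₂ → ‖x₁ 0‖ < r → ‖x₂ 0‖ < r →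
        Tendsto (fun t => (x₁ t, x₂ t)) atTop (nhds ((0 : Vec p), (0 : Vec p)))) := by
  have hV₁ := hV₁c.differentiable one_ne_zero
  have hV₂ := hV₂c.differentiable one_ne_zero
  have hh₁' := hh₁.differentiable one_ne_zero
  have hh₂' := hh₂.differentiable one_ne_zero
  have hW' : PosDefFn (closedLoopStorage V₁ V₂ h₁ h₂) := hW
  have hWc : Continuous (closedLoopStorage V₁ V₂ h₁ h₂) := by unfold closedLoopStorage; fun_prop
  have hanti {x₁ x₂ : ℝ → Vec p} (hx : ClosedLoop f₁ h₁ f₂ h₂ x₁ x₂) :=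
    antitone_closedLoopStorage hδ.le hV₁ hV₂ hh₁' hh₂' hNI hOSNI hx
  have hstable : ∀ ε > (0 : ℝ), ∃ r > (0 : ℝ), ∀ x₁ x₂ : ℝ → Vec p,
      ClosedLoop f₁ h₁ f₂ h₂ x₁ x₂ → ‖x₁ 0‖ < r → ‖x₂ 0‖ < r →
      ∀ t ≥ (0 : ℝ), ‖(x₁ t, x₂ t)‖ < ε := fun ε hε => by
    obtain ⟨r, hr, h⟩ := hW'.exists_forall_norm_lt hWc hε
    exact ⟨r, hr, fun x₁ x₂ hx hx₁ hx₂ => h _ (closedLoop_iff_isIntegralCurve.1 hx).continuous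
      (max_lt hx₁ hx₂) fun t ht => hanti hx ht⟩
  refine ⟨fun ε hε => ?_, ?_⟩
  · obtain ⟨r, hr, h⟩ := hstable ε hε
    exact ⟨r, hr, fun x₁ x₂ hx hx₁ hx₂ t ht => max_lt_iff.1 (h x₁ x₂ hx hx₁ hx₂ t ht)⟩
  · obtain ⟨r, hr, h⟩ := hstable 1 one_pos
    obtain ⟨C, hC⟩ := (locallyLipschitz_closedLoopField hf₁.locallyLipschitz
      hf₂.locallyLipschitz hh₁ hh₂).locallyLipschitzOn.exists_lipschitzOnWith_of_compact
      (isCompact_closedBall (0 : Vec p × Vec p) 1)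
    refine ⟨r, hr, fun x₁ x₂ hx hx₁ hx₂ => ?_⟩
    refine (closedLoop_iff_isIntegralCurve.1 hx).tendsto_zero_of_posDefFn hC
      (isCompact_closedBall _ _) hW' hWc (fun w hw hWw => ?_)
      (fun t ht => mem_closedBall_zero_iff.2 (h x₁ x₂ hx hx₁ hx₂ t ht).le) (hanti hx)
    have hw' := closedLoop_iff_isIntegralCurve.2 hw
    exact Prod.ext_iff.2 <| closedLoop_eq_zero_of_output_const hγ1 hAI₁ hAI₂ hAII₂ hAIII hw'
      (output_const_of_closedLoopStorage_const hδ hV₁ hV₂ hh₁' hh₂' hNI hOSNI hw' hWw)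

/-- The positive feedback interconnection of a nonlinear NI system H₁
and a nonlinear OSNI system H₂ satisfying Assumptions I–III, with
W(x₁,x₂) = V₁(x₁) + V₂(x₂) − h₁(x₁)ᵀh₂(x₂) positive definite, is asymptotically stable
at the origin: it is Lyapunov stable and trajectories starting sufficiently close to the
origin converge to the origin as t → ∞. -/
theorem stmt0 {p m : ℕ}
    (f₁ f₂ : Vec p → Vec m → Vec p) (h₁ h₂ : Vec p → Vec m)
    (K₁ K₂ : NNReal)
    (hf₁ : LipschitzWith K₁ (Function.uncurry f₁))
    (hf₂ : LipschitzWith K₂ (Function.uncurry f₂))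
    (hh₁ : ContDiff ℝ 1 h₁) (hh₂ : ContDiff ℝ 1 h₂)
    (V₁ V₂ : Vec p → ℝ)
    (hV₁c : ContDiff ℝ 1 V₁) (hV₂c : ContDiff ℝ 1 V₂)
    (hV₁pd : PosDefFn V₁) (hV₂pd : PosDefFn V₂)
    (δ : ℝ) (hδ : 0 < δ)
    (hNI : NIStorage f₁ h₁ V₁)
    (hOSNI : OSNIStorage f₂ h₂ V₂ δ)
    (hAI₁ : AssumptionI f₁ h₁) (hAI₂ : AssumptionI f₂ h₂)
    (hAII₁ : AssumptionII f₁ h₁) (hAII₂ : AssumptionII f₂ h₂)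
    (γ : ℝ) (hγ0 : 0 < γ) (hγ1 : γ < 1)
    (hAIII : AssumptionIII f₁ h₁ f₂ h₂ γ)
    (hW : PosDefFn (fun z : Vec p × Vec p => V₁ z.1 + V₂ z.2 - ⟪h₁ z.1, h₂ z.2⟫)) :
    -- Lyapunov stability of the equilibrium (0,0)
    (∀ ε > (0 : ℝ), ∃ r > (0 : ℝ), ∀ x₁ x₂ : ℝ → Vec p,
        ClosedLoop f₁ h₁ f₂ h₂ x₁ x₂ → ‖x₁ 0‖ < r → ‖x₂ 0‖ < r →
        ∀ t ≥ (0 : ℝ), ‖x₁ t‖ < ε ∧ ‖x₂ t‖ < ε) ∧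
    -- local attractivity of the equilibrium (0,0)
    (∃ r > (0 : ℝ), ∀ x₁ x₂ : ℝ → Vec p,
        ClosedLoop f₁ h₁ f₂ h₂ x₁ x₂ → ‖x₁ 0‖ < r → ‖x₂ 0‖ < r →
        Tendsto (fun t => (x₁ t, x₂ t)) atTop (nhds ((0 : Vec p), (0 : Vec p)))) :=
  stmt0_general f₁ f₂ h₁ h₂ K₁ K₂ hf₁ hf₂ hh₁ hh₂ V₁ V₂ hV₁c hV₂c δ hδ hNI hOSNI hAI₁ hAI₂ hAII₂ γ
    hγ1 hAIII hW
end
end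

section
/- Along any trajectory of the positive feedback interconnection (u₁ = y₂, u₂ = y₁) of a nonlinear NI system H₁ with storage function V₁ and a nonlinear OSNI system H₂ with storage function V₂ and output strictness δ > 0, the function W(x₁,x₂) = V₁(x₁) + V₂(x₂) − h₁(x₁)ᵀh₂(x₂) satisfies d/dt W(x₁(t),x₂(t)) ≤ −δ|ẏ₂(t)|² ≤ 0 for all t ≥ 0. -/
noncomputable section

open scoped RealInnerProductSpace
open Filter

theorem IsTrajectory.differentiable {p m : ℕ} {f : Vec p → Vec m → Vec p}
    {x : ℝ → Vec p} {u : ℝ → Vec m} (hx : IsTrajectory f x u) : Differentiable ℝ x :=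
  fun t => (hx t).differentiableAt

theorem deriv_add_sub_inner_le {E : Type*} [NormedAddCommGroup E] [InnerProductSpace ℝ E]
    {v₁ v₂ : ℝ → ℝ} {y₁ y₂ : ℝ → E} {t δ : ℝ}
    (hv₁ : DifferentiableAt ℝ v₁ t) (hv₂ : DifferentiableAt ℝ v₂ t)
    (hy₁ : DifferentiableAt ℝ y₁ t) (hy₂ : DifferentiableAt ℝ y₂ t)
    (h₁ : deriv v₁ t ≤ ⟪y₂ t, deriv y₁ t⟫)
    (h₂ : deriv v₂ t ≤ ⟪y₁ t, deriv y₂ t⟫ - δ * ‖deriv y₂ t‖ ^ 2) :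
    deriv (fun s => v₁ s + v₂ s - ⟪y₁ s, y₂ s⟫) t ≤ -δ * ‖deriv y₂ t‖ ^ 2 := by
  have hW : HasDerivAt (fun s => v₁ s + v₂ s - ⟪y₁ s, y₂ s⟫) _ t :=
    (hv₁.hasDerivAt.add hv₂.hasDerivAt).sub (hy₁.hasDerivAt.inner ℝ hy₂.hasDerivAt)
  -- the supply rates `⟪y₂, ẏ₁⟫ + ⟪y₁, ẏ₂⟫` cancel against the derivative of the cross term
  rw [hW.deriv, real_inner_comm (y₂ t)]
  linarith

theorem stmt1_general {p m : ℕ}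
    (f₁ f₂ : Vec p → Vec m → Vec p) (h₁ h₂ : Vec p → Vec m)
    (hh₁ : ContDiff ℝ 1 h₁) (hh₂ : ContDiff ℝ 1 h₂)
    (V₁ V₂ : Vec p → ℝ)
    (hV₁c : ContDiff ℝ 1 V₁) (hV₂c : ContDiff ℝ 1 V₂)
    (δ : ℝ) (hδ : 0 < δ)
    (hNI : NIStorage f₁ h₁ V₁)
    (hOSNI : OSNIStorage f₂ h₂ V₂ δ)
    (x₁ x₂ : ℝ → Vec p)
    (hcl : ClosedLoop f₁ h₁ f₂ h₂ x₁ x₂) :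
    ∀ t ≥ (0 : ℝ),
      deriv (fun s => V₁ (x₁ s) + V₂ (x₂ s) - ⟪h₁ (x₁ s), h₂ (x₂ s)⟫) t ≤
          -δ * ‖deriv (fun s => h₂ (x₂ s)) t‖ ^ 2 ∧
      -δ * ‖deriv (fun s => h₂ (x₂ s)) t‖ ^ 2 ≤ 0 := by
  intro t _
  obtain ⟨hx₁, hx₂⟩ := hcl
  have hy₁ := (hh₁.differentiable one_ne_zero).comp hx₁.differentiable
  have hy₂ := (hh₂.differentiable one_ne_zero).comp hx₂.differentiable
  have hv₁ := (hV₁c.differentiable one_ne_zero).comp hx₁.differentiable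
  have hv₂ := (hV₂c.differentiable one_ne_zero).comp hx₂.differentiable
  refine ⟨deriv_add_sub_inner_le (hv₁ t) (hv₂ t) (hy₁ t) (hy₂ t)
    (hNI x₁ _ hx₁ t) (hOSNI x₂ _ hx₂ t), ?_⟩
  have : 0 ≤ δ * ‖deriv (fun s => h₂ (x₂ s)) t‖ ^ 2 := by positivity
  linarith

/-- Along any trajectory of the positive feedback interconnection
(u₁ = y₂, u₂ = y₁) of a nonlinear NI system H₁ (storage V₁) and a nonlinear OSNI system
H₂ (storage V₂, output strictness δ > 0), the function
W(x₁,x₂) = V₁(x₁) + V₂(x₂) − h₁(x₁)ᵀh₂(x₂) satisfies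
d/dt W(x₁(t),x₂(t)) ≤ −δ|ẏ₂(t)|² ≤ 0 for all t ≥ 0. -/
theorem stmt1 {p m : ℕ}
    (f₁ f₂ : Vec p → Vec m → Vec p) (h₁ h₂ : Vec p → Vec m)
    (K₁ K₂ : NNReal)
    (hf₁ : LipschitzWith K₁ (Function.uncurry f₁))
    (hf₂ : LipschitzWith K₂ (Function.uncurry f₂))
    (hh₁ : ContDiff ℝ 1 h₁) (hh₂ : ContDiff ℝ 1 h₂)
    (V₁ V₂ : Vec p → ℝ)
    (hV₁c : ContDiff ℝ 1 V₁) (hV₂c : ContDiff ℝ 1 V₂)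
    (hV₁pd : PosDefFn V₁) (hV₂pd : PosDefFn V₂)
    (δ : ℝ) (hδ : 0 < δ)
    (hNI : NIStorage f₁ h₁ V₁)
    (hOSNI : OSNIStorage f₂ h₂ V₂ δ)
    (x₁ x₂ : ℝ → Vec p)
    (hcl : ClosedLoop f₁ h₁ f₂ h₂ x₁ x₂) :
    ∀ t ≥ (0 : ℝ),
      deriv (fun s => V₁ (x₁ s) + V₂ (x₂ s) - ⟪h₁ (x₁ s), h₂ (x₂ s)⟫) t ≤
          -δ * ‖deriv (fun s => h₂ (x₂ s)) t‖ ^ 2 ∧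
      -δ * ‖deriv (fun s => h₂ (x₂ s)) t‖ ^ 2 ≤ 0 :=
  stmt1_general f₁ f₂ h₁ h₂ hh₁ hh₂ V₁ V₂ hV₁c hV₂c δ hδ hNI hOSNI x₁ x₂ hcl
end
end

section
/- Let (A,B,C) with A ∈ ℝ^{q×q}, B ∈ ℝ^{q×m}, C ∈ ℝ^{m×q} be a state-space realization of a linear system ẋ = Ax + Bu, y = Cx which is OSNI with output strictness δ > 0 in the dissipativity sense: there is a positive definite C¹ storage function V₂ : ℝ^q → ℝ such that d/dt V₂(x(t)) ≤ u(t)ᵀẏ(t) − δ|ẏ(t)|² along every trajectory. Consider two identical copies with states x₁, x₂, inputs u₁, u₂, outputs y₁ = Cx₁, y₂ = Cx₂, and form the network with Laplacian L₂ = [[1,−1],[−1,1]] (transfer function L₂ ⊗ M(s)), whose input is ũ = (u₁,u₂) and whose output is ỹ = (y₁ − y₂, y₂ − y₁). Then the function Ṽ(x₁,x₂) := V₂(x₁ − x₂) satisfies d/dt Ṽ ≤ ũᵀ(dỹ/dt) − (δ/2)|dỹ/dt|² along every trajectory of the two copies; i.e., the two-node networked system is OSNI with output strictness δ/2. -/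
noncomputable section

open scoped RealInnerProductSpace
open Filter

/-! By linearity, x₁ − x₂ is itself a trajectory of (A,B,C), driven by u₁ − u₂ and with
output y₁ − y₂, so the OSNI inequality of V₂ applies to it. Since ỹ = (e, −e) with
e = y₁ − y₂, one has ũᵀ(dỹ/dt) = (u₁ − u₂)ᵀė and |dỹ/dt|² = 2|ė|², which halves the
output strictness. -/

section Linear

variable {q m : ℕ} {A : Matrix (Fin q) (Fin q) ℝ} {B : Matrix (Fin q) (Fin m) ℝ}

theorem IsTrajectory.linF_sub {x₁ x₂ : ℝ → Vec q} {u₁ u₂ : ℝ → Vec m}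
    (h₁ : IsTrajectory (linF A B) x₁ u₁) (h₂ : IsTrajectory (linF A B) x₂ u₂) :
    IsTrajectory (linF A B) (fun s => x₁ s - x₂ s) (fun s => u₁ s - u₂ s) := by
  intro t
  refine ((h₁ t).fun_sub (h₂ t)).congr_deriv ?_
  simp only [linF, map_sub]
  abel

theorem linH_sub (C : Matrix (Fin m) (Fin q) ℝ) (x y : Vec q) :
    linH C (x - y) = linH C x - linH C y :=
  map_sub _ x y

theorem OSNIStorage.deriv_comp_sub_le {C : Matrix (Fin m) (Fin q) ℝ} {V : Vec q → ℝ}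
    {δ : ℝ} (hV : OSNIStorage (linF A B) (linH C) V δ) {x₁ x₂ : ℝ → Vec q}
    {u₁ u₂ : ℝ → Vec m} (h₁ : IsTrajectory (linF A B) x₁ u₁)
    (h₂ : IsTrajectory (linF A B) x₂ u₂) (t : ℝ) :
    deriv (fun s => V (x₁ s - x₂ s)) t ≤
      ⟪u₁ t - u₂ t, deriv (fun s => linH C (x₁ s) - linH C (x₂ s)) t⟫ -
        δ * ‖deriv (fun s => linH C (x₁ s) - linH C (x₂ s)) t‖ ^ 2 := by
  simpa only [linH_sub] using hV _ _ (h₁.linF_sub h₂) t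

end Linear

theorem stmt3_general {q m : ℕ}
    (A : Matrix (Fin q) (Fin q) ℝ) (B : Matrix (Fin q) (Fin m) ℝ)
    (C : Matrix (Fin m) (Fin q) ℝ)
    (V₂ : Vec q → ℝ) (δ : ℝ)
    (hOSNI : OSNIStorage (linF A B) (linH C) V₂ δ)
    (x₁ x₂ : ℝ → Vec q) (u₁ u₂ : ℝ → Vec m)
    (hx₁ : IsTrajectory (linF A B) x₁ u₁)
    (hx₂ : IsTrajectory (linF A B) x₂ u₂) :
    ∀ t : ℝ,
      deriv (fun s => V₂ (x₁ s - x₂ s)) t ≤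
        (⟪u₁ t, deriv (fun s => linH C (x₁ s) - linH C (x₂ s)) t⟫ +
          ⟪u₂ t, deriv (fun s => linH C (x₂ s) - linH C (x₁ s)) t⟫) -
        (δ / 2) * (‖deriv (fun s => linH C (x₁ s) - linH C (x₂ s)) t‖ ^ 2 +
          ‖deriv (fun s => linH C (x₂ s) - linH C (x₁ s)) t‖ ^ 2) := by
  intro t
  have hdiff := hOSNI.deriv_comp_sub_le hx₁ hx₂ t
  have hswap : (fun s => linH C (x₂ s) - linH C (x₁ s)) =
      fun s => -(linH C (x₁ s) - linH C (x₂ s)) :=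
    funext fun s => (neg_sub _ _).symm
  rw [hswap, deriv.fun_neg, inner_neg_right, norm_neg]
  rw [inner_sub_left] at hdiff
  linarith

/-- If the linear system (A,B,C) is OSNI with output strictness δ > 0
(dissipativity sense, storage V₂), then the two-node network L₂ ⊗ M(s), with input
ũ = (u₁,u₂) and output ỹ = (y₁ − y₂, y₂ − y₁), admits Ṽ(x₁,x₂) = V₂(x₁ − x₂) as a
storage function satisfying d/dt Ṽ ≤ ũᵀ(dỹ/dt) − (δ/2)|dỹ/dt|² along every trajectory;
i.e., the two-node networked system is OSNI with output strictness δ/2.  (The inner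
product ũᵀ(dỹ/dt) and squared norm |dỹ/dt|² of the stacked vectors are written out
blockwise.) -/
theorem stmt3 {q m : ℕ}
    (A : Matrix (Fin q) (Fin q) ℝ) (B : Matrix (Fin q) (Fin m) ℝ)
    (C : Matrix (Fin m) (Fin q) ℝ)
    (V₂ : Vec q → ℝ) (δ : ℝ) (hδ : 0 < δ)
    (hpd : PosDefFn V₂) (hC1 : ContDiff ℝ 1 V₂)
    (hOSNI : OSNIStorage (linF A B) (linH C) V₂ δ)
    (x₁ x₂ : ℝ → Vec q) (u₁ u₂ : ℝ → Vec m)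
    (hx₁ : IsTrajectory (linF A B) x₁ u₁)
    (hx₂ : IsTrajectory (linF A B) x₂ u₂) :
    ∀ t : ℝ,
      deriv (fun s => V₂ (x₁ s - x₂ s)) t ≤
        (⟪u₁ t, deriv (fun s => linH C (x₁ s) - linH C (x₂ s)) t⟫ +
          ⟪u₂ t, deriv (fun s => linH C (x₂ s) - linH C (x₁ s)) t⟫) -
        (δ / 2) * (‖deriv (fun s => linH C (x₁ s) - linH C (x₂ s)) t‖ ^ 2 +
          ‖deriv (fun s => linH C (x₂ s) - linH C (x₁ s)) t‖ ^ 2) :=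
  stmt3_general A B C V₂ δ hOSNI x₁ x₂ u₁ u₂ hx₁ hx₂
end
end
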